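/- arXiv:2106.11674 — 4 statements merged into one kernel-verified Lean document; each statement's English description precedes it below -/
import Mathlib

section
/- Every lcm-monoid M carries a left 𝓜-brace structure (M, ⊕, ·) whose multiplicative monoid is M itself: defining a ⊕ b as the lcm of a and b with respect to left-divisibility, (M, ⊕) is a commutative monoid with identity 1, (M, ·) is a monoid, and a·(b ⊕ c) = a·b ⊕ a·c for all a, b, c ∈ M. -/
/-- Every lcm-monoid carries a left 𝓜-brace structure: the lcm operation `⊕` w.r.t.
left-divisibility makes `(M, ⊕)` a commutative monoid with identity `1`, and left
multiplication distributes over `⊕`. -/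
theorem lcm_monoid_left_M_brace (M : Type*) [Monoid M]
    (hcancel : ∀ a b c : M, a * b = a * c → b = c)
    (hunit : ∀ a : M, IsUnit a → a = 1)
    (lcm : M → M → M)
    (hleft : ∀ a b : M, ∃ c, lcm a b = a * c)
    (hright : ∀ a b : M, ∃ c, lcm a b = b * c)
    (hmin : ∀ a b g : M, (∃ c, g = a * c) → (∃ c, g = b * c) → ∃ c, g = lcm a b * c) :
    (∀ a b : M, lcm a b = lcm b a) ∧
    (∀ a b c : M, lcm (lcm a b) c = lcm a (lcm b c)) ∧
    (∀ a : M, lcm a 1 = a ∧ lcm 1 a = a) ∧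
    (∀ a b c : M, a * lcm b c = lcm (a * b) (a * c)) := by
  -- mutual left-divisibility implies equality
  have anti : ∀ x y : M, (∃ c, y = x * c) → (∃ c, x = y * c) → x = y := by
    rintro x y ⟨c, hc⟩ ⟨d, hd⟩
    have hx : x * (c * d) = x * 1 := by
      rw [mul_one, ← mul_assoc, ← hc, ← hd]
    have hcd : c * d = 1 := hcancel x _ _ hx
    have hy : y * (d * c) = y * 1 := by
      rw [mul_one, ← mul_assoc, ← hd, ← hc]
    have hdc : d * c = 1 := hcancel y _ _ hy
    have : c = 1 := hunit c ⟨⟨c, d, hcd, hdc⟩, rfl⟩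
    rw [hc, this, mul_one]
  -- transitivity of left divisibility
  have trans : ∀ x y z : M, (∃ c, y = x * c) → (∃ c, z = y * c) → ∃ c, z = x * c := by
    rintro x y z ⟨c, hc⟩ ⟨d, hd⟩
    exact ⟨c * d, by rw [hd, hc, mul_assoc]⟩
  refine ⟨?_, ?_, ?_, ?_⟩
  · intro a b
    exact anti _ _ (hmin a b _ (hright b a) (hleft b a))
      (hmin b a _ (hright a b) (hleft a b))
  · intro a b c
    refine anti _ _ ?_ ?_
    · -- lcm a (lcm b c) = lcm (lcm a b) c * _
      have ha : ∃ d, lcm a (lcm b c) = a * d := hleft _ _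
      have hbc : ∃ d, lcm a (lcm b c) = lcm b c * d := hright _ _
      have hb : ∃ d, lcm a (lcm b c) = b * d := trans _ _ _ (hleft b c) hbc
      have hc : ∃ d, lcm a (lcm b c) = c * d := trans _ _ _ (hright b c) hbc
      exact hmin _ _ _ (hmin a b _ ha hb) hc
    · have hc : ∃ d, lcm (lcm a b) c = c * d := hright _ _
      have hab : ∃ d, lcm (lcm a b) c = lcm a b * d := hleft _ _
      have ha : ∃ d, lcm (lcm a b) c = a * d := trans _ _ _ (hleft a b) hab
      have hb : ∃ d, lcm (lcm a b) c = b * d := trans _ _ _ (hright a b) hab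
      exact hmin _ _ _ ha (hmin b c _ hb hc)
  · intro a
    constructor
    · exact (anti _ _ (hleft a 1)
        (hmin a 1 a ⟨1, (mul_one a).symm⟩ ⟨a, (one_mul a).symm⟩)).symm
    · exact (anti _ _ (hright 1 a)
        (hmin 1 a a ⟨a, (one_mul a).symm⟩ ⟨1, (mul_one a).symm⟩)).symm
  · intro a b c
    refine anti _ _ ?_ ?_
    · -- lcm (a*b) (a*c) = a * lcm b c * _
      obtain ⟨u, hu⟩ := hleft (a * b) (a * c)
      obtain ⟨v, hv⟩ := hright (a * b) (a * c)
      have hbu : b * u = c * v := by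
        apply hcancel a
        rw [← mul_assoc, ← mul_assoc, ← hu, ← hv]
      obtain ⟨w, hw⟩ := hmin b c (b * u) ⟨u, rfl⟩ ⟨v, hbu⟩
      exact ⟨w, by rw [hu, mul_assoc, hw, ← mul_assoc]⟩
    · obtain ⟨d, hd⟩ := hleft b c
      obtain ⟨e, he⟩ := hright b c
      exact hmin (a * b) (a * c) _ ⟨d, by rw [hd, mul_assoc]⟩
        ⟨e, by rw [he, mul_assoc]⟩
end

section
/- If M is a right-cancellative monoid in which 1 is the unique invertible element and every pair of elements has a least common multiple with respect to right-divisibility, then defining a + b as this right-lcm makes (M, +, ·) a right 𝓜-brace: (M, +) is a commutative monoid and (a + b)·c = a·c + b·c for all a, b, c ∈ M. -/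
/-- A right-cancellative monoid in which `1` is the unique invertible element and every
pair of elements has an lcm w.r.t. right-divisibility yields a right 𝓜-brace:
the right-lcm operation `+` makes `(M, +)` a commutative monoid and
`(a + b) * c = a * c + b * c`. -/
theorem rlcm_monoid_right_M_brace (M : Type*) [Monoid M]
    (hcancel : ∀ a b c : M, b * a = c * a → b = c)
    (hunit : ∀ a : M, IsUnit a → a = 1)
    (rlcm : M → M → M)
    (hleft : ∀ a b : M, ∃ c, rlcm a b = c * a)
    (hright : ∀ a b : M, ∃ c, rlcm a b = c * b)
    (hmin : ∀ a b g : M, (∃ c, g = c * a) → (∃ c, g = c * b) → ∃ c, g = c * rlcm a b) :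
    (∀ a b : M, rlcm a b = rlcm b a) ∧
    (∀ a b c : M, rlcm (rlcm a b) c = rlcm a (rlcm b c)) ∧
    (∀ a : M, rlcm a 1 = a ∧ rlcm 1 a = a) ∧
    (∀ a b c : M, rlcm a b * c = rlcm (a * c) (b * c)) := by
  have dtrans : ∀ a b g : M, (∃ c, b = c * a) → (∃ c, g = c * b) → ∃ c, g = c * a := by
    rintro a b g ⟨c, rfl⟩ ⟨d, rfl⟩
    exact ⟨d * c, (mul_assoc _ _ _).symm⟩
  have antisym : ∀ x y : M, (∃ c, x = c * y) → (∃ c, y = c * x) → x = y := by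
    rintro x y ⟨c, hc⟩ ⟨d, hd⟩
    have h1 : c * d = 1 := by
      apply hcancel x
      rw [one_mul, mul_assoc, ← hd, ← hc]
    have h2 : d * c = 1 := by
      apply hcancel y
      rw [one_mul, mul_assoc, ← hc, ← hd]
    have hc1 : c = 1 := hunit c ⟨⟨c, d, h1, h2⟩, rfl⟩
    rw [hc, hc1, one_mul]
  refine ⟨?_, ?_, ?_, ?_⟩
  · intro a b
    exact antisym _ _ (hmin b a _ (hright a b) (hleft a b))
      (hmin a b _ (hright b a) (hleft b a))
  · intro a b c
    apply antisym
    · -- rlcm (rlcm a b) c = _ * rlcm a (rlcm b c)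
      have hab : ∃ x, rlcm (rlcm a b) c = x * rlcm a b := hleft _ _
      have ha : ∃ x, rlcm (rlcm a b) c = x * a := dtrans _ _ _ (hleft a b) hab
      have hb : ∃ x, rlcm (rlcm a b) c = x * b := dtrans _ _ _ (hright a b) hab
      have hc : ∃ x, rlcm (rlcm a b) c = x * c := hright _ _
      exact hmin a (rlcm b c) _ ha (hmin b c _ hb hc)
    · have hbc : ∃ x, rlcm a (rlcm b c) = x * rlcm b c := hright _ _
      have hb : ∃ x, rlcm a (rlcm b c) = x * b := dtrans _ _ _ (hleft b c) hbc
      have hc : ∃ x, rlcm a (rlcm b c) = x * c := dtrans _ _ _ (hright b c) hbc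
      have ha : ∃ x, rlcm a (rlcm b c) = x * a := hleft _ _
      exact hmin (rlcm a b) c _ (hmin a b _ ha hb) hc
  · intro a
    constructor
    · exact antisym _ _ (hleft a 1)
        (hmin a 1 a ⟨1, (one_mul a).symm⟩ ⟨a, (mul_one a).symm⟩)
    · exact antisym _ _ (hright 1 a)
        (hmin 1 a a ⟨a, (mul_one a).symm⟩ ⟨1, (one_mul a).symm⟩)
  · intro a b c
    apply antisym
    · -- rlcm a b * c is a common right multiple of a*c and b*c
      obtain ⟨x, hx⟩ := hleft a b
      obtain ⟨y, hy⟩ := hright a b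
      refine hmin (a * c) (b * c) _ ⟨x, ?_⟩ ⟨y, ?_⟩
      · rw [hx, mul_assoc]
      · rw [hy, mul_assoc]
    · obtain ⟨e, he⟩ := hleft (a * c) (b * c)
      obtain ⟨f, hf⟩ := hright (a * c) (b * c)
      have key : e * a = f * b := by
        apply hcancel c
        rw [mul_assoc, mul_assoc, ← he, ← hf]
      obtain ⟨h, hh⟩ := hmin a b (e * a) ⟨e, rfl⟩ ⟨f, key⟩
      exact ⟨h, by rw [he, ← mul_assoc, hh, mul_assoc]⟩
end

section
/- Let G be a left brace and define r : G × G → G × G by r(x, y) = (λ_x(y), λ_{λ_x(y)}^{-1}(x)), where λ_x(y) = x·y − x. Then r is involutive: r(r(x, y)) = (x, y) for all x, y ∈ G. -/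
/-- The map `λ_a(b) = a·b − a` of a left brace. -/
noncomputable def braceLambda {G : Type*} [AddCommGroup G] [Group G] (a b : G) : G :=
  a * b - a

/-- The solution `r(x,y) = (λ_x(y), λ_{λ_x(y)}⁻¹(x))` associated to a left brace. -/
noncomputable def braceR {G : Type*} [AddCommGroup G] [Group G] (p : G × G) : G × G :=
  (braceLambda p.1 p.2, Function.invFun (braceLambda (braceLambda p.1 p.2)) p.1)

section aux
variable {G : Type*} [AddCommGroup G] [Group G]
  (hb : ∀ a b c : G, a * (b + c) = a * b + a * c - a)
include hb

private lemma brace_mul_zero (a : G) : a * 0 = a := by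
  have h := hb a 0 0
  rw [add_zero] at h
  have h2 : a * 0 + a * 0 = a * 0 + a := sub_eq_iff_eq_add.mp h.symm
  exact (add_left_cancel h2).symm ▸ rfl

private lemma brace_zero_eq_one : (0 : G) = 1 := by
  have := brace_mul_zero hb 1
  rw [one_mul] at this
  exact this

private lemma brace_mul_sub (a b c : G) : a * (b - c) = a * b - a * c + a := by
  have h := hb a (b - c) c
  rw [sub_add_cancel] at h
  rw [h]; abel

private lemma lambda_comp (a b c : G) :
    braceLambda a (braceLambda b c) = braceLambda (a * b) c := by
  unfold braceLambda
  rw [brace_mul_sub hb, mul_assoc]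
  abel

private lemma lambda_one (b : G) : braceLambda (1 : G) b = b := by
  unfold braceLambda
  rw [one_mul, ← brace_zero_eq_one hb, sub_zero]

private lemma lambda_left_inv (a : G) :
    Function.LeftInverse (braceLambda a⁻¹) (braceLambda a) := by
  intro b
  rw [lambda_comp hb, inv_mul_cancel, lambda_one hb]

private lemma lambda_invFun (a x : G) :
    Function.invFun (braceLambda a) x = braceLambda a⁻¹ x := by
  have hli := lambda_left_inv hb a
  have hri : Function.RightInverse (braceLambda a⁻¹) (braceLambda a) := by
    intro b
    rw [lambda_comp hb, mul_inv_cancel, lambda_one hb]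
  have hsurj : Function.Surjective (braceLambda a) := hri.surjective
  have h := Function.invFun_eq (f := braceLambda a) (hsurj x)
  have hinj : Function.Injective (braceLambda a) := hli.injective
  apply hinj
  rw [h, hri x]

end aux

/-- The solution associated to a left brace is involutive: `r ∘ r = id`. -/
theorem left_brace_r_involutive (G : Type*) [AddCommGroup G] [Group G]
    (hb : ∀ a b c : G, a * (b + c) = a * b + a * c - a) :
    ∀ x y : G, braceR (braceR (x, y)) = (x, y) := by
  intro x y
  simp only [braceR, lambda_invFun hb]
  have h1 : braceLambda (braceLambda x y) (braceLambda (braceLambda x y)⁻¹ x) = x := by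
    rw [lambda_comp hb, mul_inv_cancel, lambda_one hb]
  simp only [h1]
  rw [lambda_comp hb, inv_mul_cancel, lambda_one hb]
end

section
/- Let G be a left brace and define r : G × G → G × G by r(x, y) = (λ_x(y), λ_{λ_x(y)}^{-1}(x)), where λ_x(y) = x·y − x. Then r satisfies the set-theoretic Yang–Baxter (braid) relation r^{12} r^{23} r^{12} = r^{23} r^{12} r^{23} on G × G × G. -/
/-- `r` acting on the first and second components of `G × G × G`. -/
noncomputable def braceR12 {G : Type*} [AddCommGroup G] [Group G] (p : G × G × G) :
    G × G × G :=
  ((braceR (p.1, p.2.1)).1, (braceR (p.1, p.2.1)).2, p.2.2)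

/-- `r` acting on the second and third components of `G × G × G`. -/
noncomputable def braceR23 {G : Type*} [AddCommGroup G] [Group G] (p : G × G × G) :
    G × G × G :=
  (p.1, braceR p.2)

section
variable {G : Type*} [AddCommGroup G] [Group G]

lemma braceLambda_injective (a : G) : Function.Injective (braceLambda a) := by
  intro b c h
  have : a * b = a * c := by
    have := sub_left_injective (G := G) (b := a) h
    simpa [braceLambda] using h
  exact mul_left_cancel this

lemma invFun_braceLambda (a y : G) : Function.invFun (braceLambda a) y = a⁻¹ * (y + a) := by
  have h : braceLambda a (a⁻¹ * (y + a)) = y := by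
    simp [braceLambda, ← mul_assoc]
  have h2 := Function.invFun_eq (f := braceLambda a) ⟨_, h⟩
  exact braceLambda_injective a (h2.trans h.symm)

lemma braceR_eq (x y : G) :
    braceR (x, y) = (x * y - x, (x * y - x)⁻¹ * (x * y)) := by
  simp only [braceR, braceLambda, invFun_braceLambda]
  congr 1
  congr 1
  abel

variable (hb : ∀ a b c : G, a * (b + c) = a * b + a * c - a)

include hb

lemma brace_one_eq_zero : (1 : G) = 0 := by
  have := hb 1 0 0
  simpa using this

lemma brace_mul_neg (a b : G) : a * (-b) = a + a - a * b := by
  have h := hb a b (-b)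
  have h0 : a * (0 : G) = a := by
    rw [← brace_one_eq_zero hb, mul_one]
  rw [add_neg_cancel, h0] at h
  linear_combination (norm := abel) -h

lemma braceLambda_mul (a b c : G) :
    braceLambda (a * b) c = braceLambda a (braceLambda b c) := by
  simp only [braceLambda, sub_eq_add_neg (b * c), hb, brace_mul_neg hb, mul_assoc]
  abel
end

section
variable {G : Type*} [AddCommGroup G] [Group G]

lemma braceR_eq' (x y : G) :
    braceR (x, y) = (braceLambda x y, (braceLambda x y)⁻¹ * (x * y)) := by
  rw [braceR_eq]; simp [braceLambda]

lemma mul_eq_braceLambda_add (a b : G) : a * b = braceLambda a b + a := by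
  simp [braceLambda]
end



/-- The solution associated to a left brace satisfies the set-theoretic Yang–Baxter
(braid) relation `r¹² r²³ r¹² = r²³ r¹² r²³`. -/

theorem left_brace_r_yang_baxter (G : Type*) [AddCommGroup G] [Group G]
    (hb : ∀ a b c : G, a * (b + c) = a * b + a * c - a) :
    braceR12 ∘ braceR23 ∘ braceR12 = (braceR23 ∘ braceR12 ∘ braceR23 : G × G × G → G × G × G) := by
  funext p
  obtain ⟨x, y, z⟩ := p
  simp only [Function.comp_apply, braceR12, braceR23, braceR_eq', Prod.mk.injEq]
  set u1 : G := braceLambda x y with hu1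
  set v1 : G := u1⁻¹ * (x * y) with hv1
  set a1 : G := braceLambda y z with ha1
  set b1 : G := a1⁻¹ * (y * z) with hb1
  set a2 : G := braceLambda x a1 with ha2
  set b2 : G := a2⁻¹ * (x * a1) with hb2def
  -- basic multiplicative facts
  have hu1v1 : u1 * v1 = x * y := by rw [hv1]; group
  have ha2eq : a2 = braceLambda (x * y) z := by
    rw [ha2, ha1, braceLambda_mul hb]
  have ha2val : a2 = x * y * z - x * y := by rw [ha2eq, braceLambda]
  -- key : u1 * braceLambda v1 z = x*y*z - x
  have key2 : u1 * braceLambda v1 z = x * y * z - x := by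
    rw [mul_eq_braceLambda_add, ← braceLambda_mul hb, hu1v1, braceLambda, hu1, braceLambda]
    abel
  -- C1 : braceLambda u1 (braceLambda v1 z) = a2
  have C1 : braceLambda u1 (braceLambda v1 z) = a2 := by
    rw [← braceLambda_mul hb, hu1v1, ha2eq]
  -- braceLambda a1 b1 = y
  have hlb1 : braceLambda a1 b1 = y := by
    rw [hb1, braceLambda, mul_inv_cancel_left, ha1, braceLambda]
    abel
  -- braceLambda b2 b1 = a2⁻¹ * (x*y*z - x)
  have hLb2b1 : braceLambda b2 b1 = a2⁻¹ * (x * y * z - x) := by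
    apply braceLambda_injective a2
    rw [← braceLambda_mul hb]
    have h1 : a2 * b2 = x * a1 := by rw [hb2def]; group
    rw [h1, braceLambda_mul hb, hlb1, braceLambda, braceLambda, mul_inv_cancel_left, ha2val]
    abel
  -- b2 * b1 = a2⁻¹ * (x*y*z)
  have hb2b1 : b2 * b1 = a2⁻¹ * (x * y * z) := by
    rw [hb2def, hb1]; group
  -- braceLambda v1 z = u1⁻¹ * (x*y*z - x)
  have hLv1z : braceLambda v1 z = u1⁻¹ * (x * y * z - x) := by
    rw [← key2, inv_mul_cancel_left]
  refine ⟨C1, ?_, ?_⟩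
  · rw [C1, key2, hLb2b1]
  · rw [hLb2b1, hb2b1, hLv1z, hv1]
    group
end
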